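/- arXiv:2312.16622 — 2 statements merged into one kernel-verified Lean document; each statement's English description precedes it below -/
import Mathlib

section
/- Let M be a smooth manifold, O_M its sheaf of smooth functions, and (E, Q) a sheaf of differential graded O_M-modules (a cochain complex of sheaves of O_M-modules with O_M-linear differential Q). Then the presheaf U ↦ H•(E(U), Q(U)) = ker Q(U)/im Q(U) is a sheaf of graded O_M-modules. -/
open scoped Manifold
open TopologicalSpace Set

variable {EM : Type} [NormedAddCommGroup EM] [NormedSpace ℝ EM] [FiniteDimensional ℝ EM]
  {H : Type} [TopologicalSpace H] (I : ModelWithCorners ℝ EM H)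
  (M : Type) [TopologicalSpace M] [ChartedSpace H M] [IsManifold I (⊤ : ℕ∞) M]
  [T2Space M] [SigmaCompactSpace M]

/-- A sheaf of differential graded `O_M`-modules on a smooth manifold `M`:
a ℤ-indexed family of sheaves of abelian groups `sec k`, acted on by smooth
real-valued functions, with an `O_M`-linear square-zero degree `+1` differential `Q`. -/
structure DGSheafOfModules where
  /-- sections of degree `k` over an open set -/
  sec : ℤ → Opens M → AddCommGrpCat
  /-- restriction maps -/
  res : ∀ (k : ℤ) ⦃V U : Opens M⦄, V ≤ U → sec k U →+ sec k V
  res_self : ∀ (k : ℤ) (U : Opens M) (s : sec k U), res k (le_refl U) s = s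
  res_res : ∀ (k : ℤ) ⦃W V U : Opens M⦄ (hWV : W ≤ V) (hVU : V ≤ U) (s : sec k U),
    res k hWV (res k hVU s) = res k (le_trans hWV hVU) s
  /-- the action of (globally defined) smooth functions -/
  smul : ∀ (k : ℤ) (U : Opens M) (f : M → ℝ), ContMDiff I 𝓘(ℝ, ℝ) (⊤ : ℕ∞) f → sec k U → sec k U
  smul_add : ∀ k U f hf (s t : sec k U), smul k U f hf (s + t) = smul k U f hf s + smul k U f hf t
  add_smul : ∀ k U (f g : M → ℝ) hf hg hfg (s : sec k U),
    smul k U (f + g) hfg s = smul k U f hf s + smul k U g hg s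
  one_smul : ∀ k U h1 (s : sec k U), smul k U 1 h1 s = s
  mul_smul : ∀ k U (f g : M → ℝ) hf hg hfg (s : sec k U),
    smul k U (f * g) hfg s = smul k U f hf (smul k U g hg s)
  /-- the action only depends on the values of the function on the open set;
  this encodes that `sec k U` is a module over `O_M(U)`. -/
  smul_congr : ∀ k (U : Opens M) (f g : M → ℝ) hf hg (s : sec k U),
    (∀ x ∈ U, f x = g x) → smul k U f hf s = smul k U g hg s
  res_smul : ∀ k ⦃V U : Opens M⦄ (h : V ≤ U) f hf (s : sec k U),
    res k h (smul k U f hf s) = smul k V f hf (res k h s)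
  /-- the differential -/
  Q : ∀ (k : ℤ) (U : Opens M), sec k U →+ sec (k + 1) U
  Q_Q : ∀ (k : ℤ) (U : Opens M) (s : sec k U), Q (k + 1) U (Q k U s) = 0
  Q_res : ∀ (k : ℤ) ⦃V U : Opens M⦄ (h : V ≤ U) (s : sec k U),
    Q k V (res k h s) = res (k + 1) h (Q k U s)
  /-- `O_M`-linearity of the differential -/
  Q_smul : ∀ (k : ℤ) (U : Opens M) f hf (s : sec k U),
    Q k U (smul k U f hf s) = smul (k + 1) U f hf (Q k U s)
  /-- each `sec k` is a sheaf: locality -/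
  locality : ∀ (k : ℤ) (U : Opens M) {ι : Type} (V : ι → Opens M) (hVU : ∀ i, V i ≤ U),
    (∀ x ∈ U, ∃ i, x ∈ V i) → ∀ s t : sec k U,
    (∀ i, res k (hVU i) s = res k (hVU i) t) → s = t
  /-- each `sec k` is a sheaf: gluing -/
  glue : ∀ (k : ℤ) (U : Opens M) {ι : Type} (V : ι → Opens M) (hVU : ∀ i, V i ≤ U),
    (∀ x ∈ U, ∃ i, x ∈ V i) → ∀ s : ∀ i, sec k (V i),
    (∀ i j, res k (inf_le_left : V i ⊓ V j ≤ V i) (s i) =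
      res k (inf_le_right : V i ⊓ V j ≤ V j) (s j)) →
    ∃ t : sec k U, ∀ i, res k (hVU i) t = s i

/-!
The sheaves `E^k` are fine: multiplying by the functions `ρ_a` of a smooth partition of unity
subordinate to the cover (`ρ_a` supported in `V_{j(a)}`) and extending by zero, local data can be
averaged into sections over `U`. If `s = Q η_i` on each `V_i`, then `s = Q (∑ ρ_a η_{j(a)})`.
If `s_i - s_j = Q η_{ij}` on overlaps, the averages `σ_i = ∑ ρ_a η_{i j(a)}` satisfy
`Q σ_i - Q σ_j = s_i - s_j`, so the cocycles `s_i - Q σ_i` agree on overlaps and glue to a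
cocycle cohomologous to each `s_i`.
-/

def IsFinitePartitionOn {X κ : Type*} (ρ : κ → X → ℝ) (F : Finset κ) (N : Set X) : Prop :=
  (∀ a ∉ F, ∀ y ∈ N, ρ a y = 0) ∧ ∀ y ∈ N, ∑ a ∈ F, ρ a y = 1

theorem IsFinitePartitionOn.mono {X κ : Type*} {ρ : κ → X → ℝ} {F : Finset κ} {N N' : Set X}
    (h : IsFinitePartitionOn ρ F N) (hN' : N' ⊆ N) : IsFinitePartitionOn ρ F N' :=
  ⟨fun a ha y hy => h.1 a ha y (hN' hy), fun y hy => h.2 y (hN' hy)⟩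

/-- The functions are smooth on all of `M`, because `E` is only acted on by global smooth
functions. -/
structure SmoothPartitionOfUnityOn (κ : Type) (U : Opens M) {ι : Type} (V : ι → Opens M) where
  toFun : κ → M → ℝ
  contMDiff : ∀ a, ContMDiff I 𝓘(ℝ, ℝ) (⊤ : ℕ∞) (toFun a)
  index : κ → ι
  tsupport_subset : ∀ a, tsupport (toFun a) ⊆ V (index a)
  exists_isFinitePartitionOn : ∀ x ∈ U, ∃ N : Opens M, x ∈ N ∧ ∃ F, IsFinitePartitionOn toFun F N

section

omit [FiniteDimensional ℝ EM] [IsManifold I (⊤ : ℕ∞) M] [T2Space M] [SigmaCompactSpace M]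

variable {I M}

namespace SmoothPartitionOfUnityOn

variable {κ : Type} {U : Opens M} {ι : Type} {V : ι → Opens M}

instance : CoeFun (SmoothPartitionOfUnityOn I M κ U V) fun _ => κ → M → ℝ := ⟨toFun⟩

theorem exists_isFinitePartitionOn_le (ρ : SmoothPartitionOfUnityOn I M κ U V) {W : Opens M}
    (hW : W ≤ U) {x : M} (hx : x ∈ W) :
    ∃ N : Opens M, x ∈ N ∧ N ≤ W ∧ ∃ F, IsFinitePartitionOn ρ F N := by
  obtain ⟨N, hxN, F, hF⟩ := ρ.exists_isFinitePartitionOn x (hW hx)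
  exact ⟨N ⊓ W, ⟨hxN, hx⟩, inf_le_right, F, hF.mono inter_subset_left⟩

end SmoothPartitionOfUnityOn

theorem exists_opens_le_sup_of_tsupport_inter_subset {A W : Opens M} {f : M → ℝ}
    (hsupp : tsupport f ∩ W ⊆ A) : ∃ B : Opens M, B ≤ W ∧ W ≤ A ⊔ B ∧ ∀ x ∈ B, f x = 0 := by
  refine ⟨W ⊓ ⟨(tsupport f)ᶜ, (isClosed_tsupport f).isOpen_compl⟩, inf_le_left, fun x hx => ?_,
    fun x hx => image_eq_zero_of_notMem_tsupport hx.2⟩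
  by_cases hxf : x ∈ tsupport f
  · exact Opens.mem_sup.2 (Or.inl (hsupp ⟨hxf, hx⟩))
  · exact Opens.mem_sup.2 (Or.inr ⟨hx, hxf⟩)

namespace DGSheafOfModules

variable (E : DGSheafOfModules I M) {k : ℤ}

theorem res_res_comm {U W₁ W₂ N : Opens M} (h₁ : N ≤ W₁) (h₁' : W₁ ≤ U) (h₂ : N ≤ W₂)
    (h₂' : W₂ ≤ U) (s : E.sec k U) :
    E.res k h₁ (E.res k h₁' s) = E.res k h₂ (E.res k h₂' s) := by
  rw [E.res_res, E.res_res]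

theorem smul_sub {U : Opens M} (f : M → ℝ) (hf : ContMDiff I 𝓘(ℝ, ℝ) (⊤ : ℕ∞) f)
    (s t : E.sec k U) : E.smul k U f hf (s - t) = E.smul k U f hf s - E.smul k U f hf t :=
  map_sub (AddMonoidHom.mk' _ (E.smul_add k U f hf)) s t

theorem zero_smul {U : Opens M} (h0 : ContMDiff I 𝓘(ℝ, ℝ) (⊤ : ℕ∞) (0 : M → ℝ))
    (s : E.sec k U) : E.smul k U 0 h0 s = 0 := by
  have h := E.add_smul k U 0 0 h0 h0 (by simpa using h0) s
  rw [E.smul_congr k U (0 + 0) 0 _ h0 s fun x _ => by simp] at h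
  exact left_eq_add.1 h

theorem smul_eq_zero_of_forall_eq_zero {U : Opens M} {f : M → ℝ}
    (hf : ContMDiff I 𝓘(ℝ, ℝ) (⊤ : ℕ∞) f) (s : E.sec k U) (h : ∀ x ∈ U, f x = 0) :
    E.smul k U f hf s = 0 := by
  rw [E.smul_congr k U f 0 hf contMDiff_const s h, E.zero_smul]

theorem sum_smul {U : Opens M} {κ : Type} (F : Finset κ) (f : κ → M → ℝ)
    (hf : ∀ a, ContMDiff I 𝓘(ℝ, ℝ) (⊤ : ℕ∞) (f a))
    (hF : ContMDiff I 𝓘(ℝ, ℝ) (⊤ : ℕ∞) (∑ a ∈ F, f a)) (s : E.sec k U) :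
    E.smul k U (∑ a ∈ F, f a) hF s = ∑ a ∈ F, E.smul k U (f a) (hf a) s := by
  classical
  induction F using Finset.induction with
  | empty => simpa using E.zero_smul hF s
  | insert a F ha ih =>
    have hFsum : ContMDiff I 𝓘(ℝ, ℝ) (⊤ : ℕ∞) (∑ b ∈ F, f b) :=
      contMDiff_finsetSum' fun b _ => hf b
    rw [Finset.sum_insert ha (f := fun b => E.smul k U (f b) (hf b) s), ← ih hFsum,
      ← E.add_smul k U _ _ (hf a) hFsum ((hf a).add hFsum)]
    exact E.smul_congr k U _ _ _ _ s fun x _ => by rw [Finset.sum_insert ha]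

theorem sum_smul_eq_self {U : Opens M} {κ : Type} {F : Finset κ} {f : κ → M → ℝ}
    (hf : ∀ a, ContMDiff I 𝓘(ℝ, ℝ) (⊤ : ℕ∞) (f a)) (hF : ∀ x ∈ U, ∑ a ∈ F, f a x = 1)
    (s : E.sec k U) : ∑ a ∈ F, E.smul k U (f a) (hf a) s = s := by
  rw [← E.sum_smul F f hf (contMDiff_finsetSum' fun a _ => hf a),
    E.smul_congr k U _ 1 _ contMDiff_const s fun x hx => by simpa using hF x hx, E.one_smul]

theorem ext_of_le_sup {A B W : Opens M} (hA : A ≤ W) (hB : B ≤ W) (hW : W ≤ A ⊔ B)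
    {s t : E.sec k W} (hsA : E.res k hA s = E.res k hA t) (hsB : E.res k hB s = E.res k hB t) :
    s = t := by
  refine E.locality k W (fun b : Bool => bif b then A else B) (by rintro (_ | _) <;> assumption)
    (fun x hx => (Opens.mem_sup.1 (hW hx)).elim (⟨true, ·⟩) (⟨false, ·⟩)) s t ?_
  rintro (_ | _)
  exacts [hsB, hsA]

theorem exists_res_eq_of_le_sup {A B W : Opens M} (hA : A ≤ W) (hB : B ≤ W) (hW : W ≤ A ⊔ B)
    (a : E.sec k A) (b : E.sec k B)
    (hab : E.res k (inf_le_left : A ⊓ B ≤ A) a = E.res k inf_le_right b) :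
    ∃ t : E.sec k W, E.res k hA t = a ∧ E.res k hB t = b := by
  have hBA : B ⊓ A ≤ A ⊓ B := inf_comm B A ▸ le_rfl
  obtain ⟨t, ht⟩ := E.glue k W (fun x : Bool => bif x then A else B)
    (by rintro (_ | _) <;> assumption)
    (fun x hx => (Opens.mem_sup.1 (hW hx)).elim (⟨true, ·⟩) (⟨false, ·⟩))
    (fun x => Bool.rec (motive := fun x => E.sec k (bif x then A else B)) b a x) (by
      rintro (_ | _) (_ | _)
      · rfl
      · simpa only [E.res_res] using congrArg (E.res k hBA) hab.symm
      · exact hab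
      · rfl)
  exact ⟨t, ht true, ht false⟩

section ExtensionByZero

variable {A W : Opens M} (hA : A ≤ W) {f : M → ℝ} (hf : ContMDiff I 𝓘(ℝ, ℝ) (⊤ : ℕ∞) f)

def IsExtensionByZero (ξ : E.sec k A) (e : E.sec k W) : Prop :=
  E.res k hA e = E.smul k A f hf ξ ∧
    ∀ ⦃N : Opens M⦄ (hN : N ≤ W), (∀ x ∈ N, f x = 0) → E.res k hN e = 0

theorem exists_isExtensionByZero (hsupp : tsupport f ∩ W ⊆ A) (ξ : E.sec k A) :
    ∃ e, E.IsExtensionByZero hA hf ξ e := by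
  obtain ⟨B, hB, hW, hfB⟩ := exists_opens_le_sup_of_tsupport_inter_subset hsupp
  obtain ⟨e, heA, heB⟩ := E.exists_res_eq_of_le_sup hA hB hW (E.smul k A f hf ξ) 0 (by
    rw [E.res_smul, map_zero]
    exact E.smul_eq_zero_of_forall_eq_zero hf _ fun x hx => hfB x hx.2)
  refine ⟨e, heA, fun N hN hfN => E.ext_of_le_sup (inf_le_left : N ⊓ A ≤ N)
    (inf_le_left : N ⊓ B ≤ N) (fun x hx => Opens.mem_sup.2 ?_) ?_ ?_⟩
  · exact (Opens.mem_sup.1 (hW (hN hx))).imp (⟨hx, ·⟩) (⟨hx, ·⟩)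
  · rw [E.res_res_comm _ hN (inf_le_right : N ⊓ A ≤ A) hA, heA, E.res_smul, map_zero]
    exact E.smul_eq_zero_of_forall_eq_zero hf _ fun x hx => hfN x hx.1
  · rw [E.res_res_comm _ hN (inf_le_right : N ⊓ B ≤ B) hB, heB, map_zero, map_zero]

variable {E hA hf}

theorem IsExtensionByZero.eq {ξ : E.sec k A} {e e' : E.sec k W}
    (he : E.IsExtensionByZero hA hf ξ e) (he' : E.IsExtensionByZero hA hf ξ e')
    (hsupp : tsupport f ∩ W ⊆ A) : e = e' := by
  obtain ⟨B, hB, hW, hfB⟩ := exists_opens_le_sup_of_tsupport_inter_subset hsupp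
  exact E.ext_of_le_sup hA hB hW (he.1.trans he'.1.symm)
    ((he.2 hB hfB).trans (he'.2 hB hfB).symm)

theorem isExtensionByZero_smul (s : E.sec k W) :
    E.IsExtensionByZero hA hf (E.res k hA s) (E.smul k W f hf s) :=
  ⟨E.res_smul k hA f hf s, fun N hN hfN => by
    rw [E.res_smul]; exact E.smul_eq_zero_of_forall_eq_zero hf _ hfN⟩

theorem IsExtensionByZero.Q {ξ : E.sec k A} {e : E.sec k W}
    (he : E.IsExtensionByZero hA hf ξ e) :
    E.IsExtensionByZero hA hf (E.Q k A ξ) (E.Q k W e) :=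
  ⟨by rw [← E.Q_res, he.1, E.Q_smul], fun N hN hfN => by rw [← E.Q_res, he.2 hN hfN, map_zero]⟩

theorem IsExtensionByZero.sub {ξ ξ' : E.sec k A} {e e' : E.sec k W}
    (he : E.IsExtensionByZero hA hf ξ e) (he' : E.IsExtensionByZero hA hf ξ' e') :
    E.IsExtensionByZero hA hf (ξ - ξ') (e - e') :=
  ⟨by rw [map_sub, he.1, he'.1, E.smul_sub], fun N hN hfN => by
    rw [map_sub, he.2 hN hfN, he'.2 hN hfN, sub_zero]⟩

theorem IsExtensionByZero.restrict {ξ : E.sec k A} {e : E.sec k W}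
    (he : E.IsExtensionByZero hA hf ξ e) {A' N : Opens M} (hN : N ≤ W) (hA'N : A' ≤ N)
    (hA'A : A' ≤ A) : E.IsExtensionByZero hA'N hf (E.res k hA'A ξ) (E.res k hN e) :=
  ⟨by rw [E.res_res_comm _ _ hA'A hA, he.1, E.res_smul], fun N' hN' hfN' => by
    rw [E.res_res]; exact he.2 _ hfN'⟩

end ExtensionByZero

variable {κ : Type} {U : Opens M} {ι : Type} {V : ι → Opens M}

section PartitionSum

variable (ρ : SmoothPartitionOfUnityOn I M κ U V)

theorem ext_of_isFinitePartitionOn {W : Opens M} (hW : W ≤ U) {s t : E.sec k W}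
    (h : ∀ ⦃N : Opens M⦄ (hN : N ≤ W) ⦃F⦄, IsFinitePartitionOn ρ F N →
      E.res k hN s = E.res k hN t) : s = t := by
  refine E.locality k W
    (fun p : {p : Opens M × Finset κ // p.1 ≤ W ∧ IsFinitePartitionOn ρ p.2 p.1} => p.1.1)
    (fun p => p.2.1) (fun x hx => ?_) s t fun p => h p.2.1 p.2.2
  obtain ⟨N, hxN, hNW, F, hF⟩ := ρ.exists_isFinitePartitionOn_le hW hx
  exact ⟨⟨(N, F), hNW, hF⟩, hxN⟩

def IsPartitionSum {W : Opens M} (e : κ → E.sec k W) (σ : E.sec k W) : Prop :=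
  ∀ ⦃N : Opens M⦄ (hN : N ≤ W) ⦃F⦄, IsFinitePartitionOn ρ F N →
    E.res k hN σ = ∑ a ∈ F, E.res k hN (e a)

variable {E ρ}

theorem exists_isPartitionSum {W : Opens M} (hW : W ≤ U) (e : κ → E.sec k W)
    (he : ∀ a ⦃N : Opens M⦄ (hN : N ≤ W), (∀ y ∈ N, ρ a y = 0) → E.res k hN (e a) = 0) :
    ∃ σ, E.IsPartitionSum ρ e σ := by
  classical
  let P := {p : Opens M × Finset κ // p.1 ≤ W ∧ IsFinitePartitionOn ρ p.2 p.1}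
  have hsum_union : ∀ (p q r : P) (hr : p.1.1 ⊓ q.1.1 ≤ r.1.1), r.1.2 ⊆ p.1.2 ∪ q.1.2 →
      E.res k hr (∑ a ∈ r.1.2, E.res k r.2.1 (e a)) =
        ∑ a ∈ p.1.2 ∪ q.1.2, E.res k (inf_le_left.trans p.2.1) (e a) := by
    intro p q r hr hrpq
    simp only [map_sum, E.res_res]
    refine Finset.sum_subset hrpq fun a _ ha => he a _ fun y hy => r.2.2.1 a ha y (hr hy)
  obtain ⟨σ, hσ⟩ := E.glue k W (fun p : P => p.1.1) (fun p => p.2.1)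
    (fun x hx => by
      obtain ⟨N, hxN, hNW, F, hF⟩ := ρ.exists_isFinitePartitionOn_le hW hx
      exact ⟨⟨(N, F), hNW, hF⟩, hxN⟩)
    (fun p => ∑ a ∈ p.1.2, E.res k p.2.1 (e a))
    (fun p q => (hsum_union p q p inf_le_left Finset.subset_union_left).trans
      (hsum_union p q q inf_le_right Finset.subset_union_right).symm)
  exact ⟨σ, fun N hN F hF => hσ ⟨(N, F), hN, hF⟩⟩

theorem IsPartitionSum.Q {W : Opens M} {e : κ → E.sec k W} {σ : E.sec k W}
    (h : E.IsPartitionSum ρ e σ) : E.IsPartitionSum ρ (fun a => E.Q k W (e a)) (E.Q k W σ) :=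
  fun N hN F hF => by simp only [← E.Q_res, h hN hF, map_sum]

theorem IsPartitionSum.res {W : Opens M} {e : κ → E.sec k W} {σ : E.sec k W}
    (h : E.IsPartitionSum ρ e σ) {W' : Opens M} (hW' : W' ≤ W) :
    E.IsPartitionSum ρ (fun a => E.res k hW' (e a)) (E.res k hW' σ) :=
  fun N hN F hF => by simp only [E.res_res, h (hN.trans hW') hF]

theorem IsPartitionSum.sub {W : Opens M} {e e' : κ → E.sec k W} {σ σ' : E.sec k W}
    (h : E.IsPartitionSum ρ e σ) (h' : E.IsPartitionSum ρ e' σ') :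
    E.IsPartitionSum ρ (fun a => e a - e' a) (σ - σ') :=
  fun N hN F hF => by simp only [map_sub, h hN hF, h' hN hF, Finset.sum_sub_distrib]

theorem IsPartitionSum.eq_of_forall_eq_smul {W : Opens M} (hW : W ≤ U) {e : κ → E.sec k W}
    {σ s : E.sec k W} (h : E.IsPartitionSum ρ e σ)
    (he : ∀ a, e a = E.smul k W (ρ a) (ρ.contMDiff a) s) : σ = s :=
  E.ext_of_isFinitePartitionOn ρ hW fun N hN F hF => by
    simp only [h hN hF, he, E.res_smul]
    exact E.sum_smul_eq_self _ hF.2 _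

end PartitionSum

theorem exists_Q_eq_of_forall_Q_eq_res (ρ : SmoothPartitionOfUnityOn I M κ U V)
    (hVU : ∀ i, V i ≤ U) (s : E.sec (k + 1) U) (η : ∀ i, E.sec k (V i))
    (hη : ∀ i, E.Q k (V i) (η i) = E.res (k + 1) (hVU i) s) : ∃ σ : E.sec k U, E.Q k U σ = s := by
  have hsupp : ∀ a, tsupport (ρ a) ∩ U ⊆ V (ρ.index a) ⊓ U := fun a _ hx =>
    ⟨ρ.tsupport_subset a hx.1, hx.2⟩
  choose e he using fun a => E.exists_isExtensionByZero inf_le_right (ρ.contMDiff a)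
    (hsupp a) (E.res k inf_le_left (η (ρ.index a)))
  obtain ⟨σ, hσ⟩ := exists_isPartitionSum le_rfl e fun a => (he a).2
  refine ⟨σ, hσ.Q.eq_of_forall_eq_smul le_rfl fun a => ?_⟩
  have hQe := (he a).Q
  rw [E.Q_res, hη, E.res_res] at hQe
  exact hQe.eq (isExtensionByZero_smul s) (hsupp a)

theorem exists_forall_res_sub_Q_eq (ρ : SmoothPartitionOfUnityOn I M κ U V)
    (hVU : ∀ i, V i ≤ U) (s : ∀ i, E.sec (k + 1) (V i))
    (η : ∀ i j, E.sec k (V i ⊓ V j))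
    (hη : ∀ i j, E.Q k (V i ⊓ V j) (η i j) =
      E.res (k + 1) (inf_le_left : V i ⊓ V j ≤ V i) (s i) -
        E.res (k + 1) (inf_le_right : V i ⊓ V j ≤ V j) (s j)) :
    ∃ σ : ∀ i, E.sec k (V i), ∀ i j,
      E.res (k + 1) (inf_le_left : V i ⊓ V j ≤ V i) (s i - E.Q k (V i) (σ i)) =
        E.res (k + 1) (inf_le_right : V i ⊓ V j ≤ V j) (s j - E.Q k (V j) (σ j)) := by
  have hsupp : ∀ i a, tsupport (ρ a) ∩ V i ⊆ V i ⊓ V (ρ.index a) := fun i a _ hx =>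
    ⟨hx.2, ρ.tsupport_subset a hx.1⟩
  choose e he using fun i a => E.exists_isExtensionByZero inf_le_left (ρ.contMDiff a)
    (hsupp i a) (η i (ρ.index a))
  choose σ hσ using fun i => exists_isPartitionSum (hVU i) (e i) fun a => (he i a).2
  refine ⟨σ, fun i j => ?_⟩
  have hQσ : E.res (k + 1) (inf_le_left : V i ⊓ V j ≤ V i) (E.Q k (V i) (σ i)) -
      E.res (k + 1) (inf_le_right : V i ⊓ V j ≤ V j) (E.Q k (V j) (σ j)) =
      E.res (k + 1) inf_le_left (s i) - E.res (k + 1) inf_le_right (s j) := by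
    refine (((hσ i).Q.res inf_le_left).sub ((hσ j).Q.res inf_le_right)).eq_of_forall_eq_smul
      (inf_le_left.trans (hVU i)) fun a => ?_
    have hA' : V (ρ.index a) ⊓ (V i ⊓ V j) ≤ V i ⊓ V j := inf_le_right
    refine IsExtensionByZero.eq ?_ (isExtensionByZero_smul (hA := hA') _) fun x hx =>
      ⟨ρ.tsupport_subset a hx.1, hx.2⟩
    -- on `V (ρ.index a) ⊓ V i ⊓ V j` the terms `s (ρ.index a)` of `Q η i _` and `Q η j _` cancel
    convert ((he i a).Q.restrict inf_le_left hA'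
      (le_inf (hA'.trans inf_le_left) inf_le_left)).sub
      ((he j a).Q.restrict inf_le_right hA' (le_inf (hA'.trans inf_le_right) inf_le_left)) using 1
    simp only [hη, map_sub, E.res_res]
    abel
  rw [map_sub, map_sub, sub_eq_sub_iff_sub_eq_sub, hQσ]

end DGSheafOfModules

end

theorem exists_smoothPartitionOfUnityOn (U : Opens M) {ι : Type} (V : ι → Opens M)
    (hcov : ∀ x ∈ U, ∃ i, x ∈ V i) : ∃ κ : Type, Nonempty (SmoothPartitionOfUnityOn I M κ U V) := by
  have : LocallyCompactSpace H := I.locallyCompactSpace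
  have : LocallyCompactSpace M := ChartedSpace.locallyCompactSpace H M
  have : SecondCountableTopology H := I.secondCountableTopology
  have : SecondCountableTopology M := ChartedSpace.secondCountable_of_sigmaCompact H M
  have : LocallyCompactSpace U := U.isOpen.locallyCompactSpace
  choose j hj using fun u : U => hcov u u.2
  choose K hKc hxK hKV using fun u : U =>
    exists_compact_subset (V (j u) ⊓ U).isOpen (show (u : M) ∈ V (j u) ⊓ U from ⟨hj u, u.2⟩)
  obtain ⟨ρ, hρ⟩ := SmoothPartitionOfUnity.exists_isSubordinate I isClosed_univ
    (fun u : U => Subtype.val ⁻¹' interior (K u))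
    (fun u => isOpen_interior.preimage continuous_subtype_val)
    fun z _ => mem_iUnion.2 ⟨z, hxK z⟩
  have hρK : ∀ u, tsupport (ρ u) ⊆ Subtype.val ⁻¹' K u := fun u =>
    (hρ u).trans (preimage_mono interior_subset)
  have hcpt : ∀ u, HasCompactSupport (ρ u) := fun u =>
    (Topology.IsInducing.subtypeVal.isCompact_preimage' (hKc u) (by
      rw [Subtype.range_coe]; exact fun x hx => (hKV u hx).2)
      ).of_isClosed_subset (isClosed_tsupport _) (hρK u)
  let f (u : U) : M → ℝ := Function.extend Subtype.val (ρ u) 0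
  have hf_val : ∀ u (z : U), f u z = ρ u z := fun u => Subtype.val_injective.extend_apply _ _
  have hf_support : ∀ u, Function.support (f u) ⊆ K u := by
    intro u x hx
    by_cases hxU : ∃ z : U, ↑z = x
    · obtain ⟨z, rfl⟩ := hxU
      rw [Function.mem_support, hf_val] at hx
      exact hρK u (subset_tsupport _ hx)
    · exact absurd (Function.extend_apply' _ _ _ hxU) hx
  refine ⟨U, ⟨{
    toFun := f
    contMDiff := fun u => ContMDiff.extend_zero (hcpt u) (ρ u).contMDiff
    index := j
    tsupport_subset := fun u =>
      (closure_minimal (hf_support u) (hKc u).isClosed).trans fun x hx => (hKV u hx).1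
    exists_isFinitePartitionOn := fun x hx => ?_ }⟩⟩
  obtain ⟨F, hF⟩ := ρ.toPartitionOfUnity.exists_finset_nhds ⟨x, hx⟩
  obtain ⟨t, htF, ht, hxt⟩ := mem_nhds_iff.1 hF
  refine ⟨⟨Subtype.val '' t, U.isOpen.isOpenMap_subtype_val t ht⟩, ⟨_, hxt, rfl⟩, F, ?_, ?_⟩
  · rintro u hu _ ⟨z, hz, rfl⟩
    rw [hf_val]
    by_contra h
    exact hu ((htF hz).2 h)
  · rintro _ ⟨z, hz, rfl⟩
    rw [Finset.sum_congr rfl fun u _ => hf_val u z]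
    exact (htF hz).1

/-- For a sheaf `(E, Q)` of differential graded `O_M`-modules on a
smooth manifold `M`, the cohomology presheaf `U ↦ ker Q(U) / im Q(U)` is a sheaf:
it satisfies both the locality axiom and the gluing axiom (stated here at the level
of cocycles, for every open set and every open cover). -/
theorem cohomology_presheaf_is_sheaf (E : DGSheafOfModules I M)
    (k : ℤ) (U : Opens M) {ι : Type} (V : ι → Opens M) (hVU : ∀ i, V i ≤ U)
    (hcov : ∀ x ∈ U, ∃ i, x ∈ V i) :
    -- locality for cohomology classes
    (∀ s : E.sec (k + 1) U, E.Q (k + 1) U s = 0 →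
      (∀ i, ∃ η : E.sec k (V i), E.Q k (V i) η = E.res (k + 1) (hVU i) s) →
      ∃ η : E.sec k U, E.Q k U η = s) ∧
    -- gluing for cohomology classes
    (∀ s : ∀ i, E.sec (k + 1) (V i), (∀ i, E.Q (k + 1) (V i) (s i) = 0) →
      (∀ i j, ∃ η : E.sec k (V i ⊓ V j),
        E.Q k (V i ⊓ V j) η =
          E.res (k + 1) (inf_le_left : V i ⊓ V j ≤ V i) (s i) -
            E.res (k + 1) (inf_le_right : V i ⊓ V j ≤ V j) (s j)) →
      ∃ t : E.sec (k + 1) U, E.Q (k + 1) U t = 0 ∧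
        ∀ i, ∃ η : E.sec k (V i),
          E.Q k (V i) η = E.res (k + 1) (hVU i) t - s i) := by
  obtain ⟨κ, ⟨ρ⟩⟩ := exists_smoothPartitionOfUnityOn I M U V hcov
  refine ⟨fun s _ hs => ?_, fun s hs hglue => ?_⟩
  · choose η hη using hs
    exact E.exists_Q_eq_of_forall_Q_eq_res ρ hVU s η hη
  · choose η hη using hglue
    obtain ⟨σ, hσ⟩ := E.exists_forall_res_sub_Q_eq ρ hVU s η hη
    obtain ⟨t, ht⟩ := E.glue (k + 1) U V hVU hcov _ hσ
    refine ⟨t, E.locality (k + 1 + 1) U V hVU hcov _ 0 fun i => ?_, fun i => ⟨-σ i, ?_⟩⟩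
    · rw [map_zero, ← E.Q_res, ht i, map_sub, hs i, E.Q_Q, sub_zero]
    · rw [map_neg, ht i]
      abel
end

section
/- Let s = (s¹,…,sᵐ) : ℝⁿ → ℝᵐ be smooth with s(0) = 0 and Ds₀ = 0, and suppose that for all 1 ≤ i ≤ j ≤ n and 1 ≤ k ≤ m the second partials satisfy ∂²s^k/∂x^i∂x^j ∈ ⟨s¹,…,sᵐ, ∂_i s¹,…,∂_i sᵐ, ∂_j s¹,…,∂_j sᵐ, ∂₁s^k,…,∂_n s^k⟩, the ideal of C^∞(ℝⁿ) generated by the listed functions. Then s ≡ 0 on ℝⁿ. -/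
/-- The partial derivative in the `i`-th coordinate direction. -/
noncomputable def pd {n : ℕ} (i : Fin n) (h : (Fin n → ℝ) → ℝ) : (Fin n → ℝ) → ℝ :=
  fun x => fderiv ℝ h x (Pi.single i 1)

lemma pd_smooth {n : ℕ} (i : Fin n) {h : (Fin n → ℝ) → ℝ} (hh : ContDiff ℝ (⊤ : ℕ∞) h) :
    ContDiff ℝ (⊤ : ℕ∞) (pd i h) :=
  (hh.fderiv_right (by simp)).clm_apply contDiff_const

lemma single_sum {n : ℕ} (v : Fin n → ℝ) : ∑ j, v j • (Pi.single j 1 : Fin n → ℝ) = v := by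
  funext r
  simp [Pi.single_apply]

lemma fderiv_eq_sum {n : ℕ} {h : (Fin n → ℝ) → ℝ} (x v : Fin n → ℝ) :
    fderiv ℝ h x v = ∑ j, v j * pd j h x := by
  conv_lhs => rw [← single_sum v]
  rw [map_sum]
  simp [pd, smul_eq_mul]

lemma pd_eq_snd {n : ℕ} {h : (Fin n → ℝ) → ℝ} (hh : ContDiff ℝ (⊤ : ℕ∞) h) (i j : Fin n)
    (x : Fin n → ℝ) :
    pd i (pd j h) x = fderiv ℝ (fderiv ℝ h) x (Pi.single i 1) (Pi.single j 1) := by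
  have hd : DifferentiableAt ℝ (fderiv ℝ h) x :=
    ((hh.fderiv_right (m := 1) (WithTop.coe_le_coe.mpr le_top)).differentiable one_ne_zero).differentiableAt
  have h2 : pd j h
      = fun y => (fderiv ℝ h y) ((fun _ : (Fin n → ℝ) => (Pi.single j 1 : Fin n → ℝ)) y) := rfl
  rw [pd, h2, fderiv_clm_apply hd (differentiableAt_const _)]
  simp

lemma pd_comm {n : ℕ} {h : (Fin n → ℝ) → ℝ} (hh : ContDiff ℝ (⊤ : ℕ∞) h) (i j : Fin n)
    (x : Fin n → ℝ) : pd i (pd j h) x = pd j (pd i h) x := by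
  rw [pd_eq_snd hh, pd_eq_snd hh]
  exact (hh.contDiffAt.isSymmSndFDerivAt (by rw [minSmoothness_of_isRCLikeNormedField]; exact WithTop.coe_le_coe.mpr le_top)).eq _ _

lemma hasDerivAt_ray {n : ℕ} {h : (Fin n → ℝ) → ℝ} (hh : Differentiable ℝ h)
    (v : Fin n → ℝ) (t : ℝ) :
    HasDerivAt (fun t : ℝ => h (t • v)) (fderiv ℝ h (t • v) v) t := by
  have h1 : HasDerivAt (fun t : ℝ => t • v) ((1:ℝ) • v) t :=
    (hasDerivAt_id t).smul_const v
  have := (hh (t • v)).hasFDerivAt.comp_hasDerivAt t h1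
  simp only [one_smul] at this
  exact this

lemma abs_add_four' (a b c d : ℝ) : |a + b + c + d| ≤ |a| + |b| + |c| + |d| := by
  calc |a + b + c + d| ≤ |a + b + c| + |d| := abs_add_le _ _
    _ ≤ |a| + |b| + |c| + |d| := by linarith [abs_add_three a b c]

lemma abs_sum_mul_le {ι : Type*} [Fintype ι] (f g : ι → ℝ) {N : ℝ}
    (hg : ∀ p, |g p| ≤ N) : |∑ p, f p * g p| ≤ (∑ p, |f p|) * N := by
  calc |∑ p, f p * g p| ≤ ∑ p, |f p * g p| := Finset.abs_sum_le_sum_abs _ _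
    _ = ∑ p, |f p| * |g p| := by simp [abs_mul]
    _ ≤ ∑ p, |f p| * N :=
        Finset.sum_le_sum fun p _ => mul_le_mul_of_nonneg_left (hg p) (abs_nonneg _)
    _ = (∑ p, |f p|) * N := (Finset.sum_mul _ _ _).symm

/-- If `s : ℝⁿ → ℝᵐ` is smooth with `s 0 = 0` and `Ds₀ = 0`, and each
second partial `∂²sᵏ/∂xⁱ∂xʲ` (for `i ≤ j`) lies in the ideal of `C^∞(ℝⁿ)` generated by
`s¹, …, sᵐ, ∂ᵢs¹, …, ∂ᵢsᵐ, ∂ⱼs¹, …, ∂ⱼsᵐ, ∂₁sᵏ, …, ∂ₙsᵏ`, then `s ≡ 0`. -/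
theorem vanishing_of_second_partials_in_ideal
    (n m : ℕ) (s : (Fin n → ℝ) → (Fin m → ℝ)) (hs : ContDiff ℝ (⊤ : ℕ∞) s)
    (hs0 : s 0 = 0) (hD0 : fderiv ℝ s 0 = 0)
    (hsecond : ∀ (i j : Fin n), i ≤ j → ∀ k : Fin m,
      ∃ (a b c : Fin m → (Fin n → ℝ) → ℝ) (d : Fin n → (Fin n → ℝ) → ℝ),
        (∀ l, ContDiff ℝ (⊤ : ℕ∞) (a l)) ∧ (∀ l, ContDiff ℝ (⊤ : ℕ∞) (b l)) ∧
        (∀ l, ContDiff ℝ (⊤ : ℕ∞) (c l)) ∧ (∀ l, ContDiff ℝ (⊤ : ℕ∞) (d l)) ∧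
        ∀ x, pd i (pd j (fun z => s z k)) x =
          (∑ l, a l x * s x l) + (∑ l, b l x * pd i (fun z => s z l) x) +
            (∑ l, c l x * pd j (fun z => s z l) x) +
            ∑ c', d c' x * pd c' (fun z => s z k) x) :
    ∀ x, s x = 0 := by
  intro v
  -- componentwise smoothness
  have hsk : ∀ k, ContDiff ℝ (⊤ : ℕ∞) (fun z => s z k) := fun k => contDiff_pi.mp hs k
  have hsdk : ∀ k, Differentiable ℝ (fun z => s z k) :=
    fun k => (hsk k).differentiable (by simp)
  have hpds : ∀ (i : Fin n) (k : Fin m), ContDiff ℝ (⊤ : ℕ∞) (pd i (fun z => s z k)) :=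
    fun i k => pd_smooth i (hsk k)
  have hpdd : ∀ (i : Fin n) (k : Fin m), Differentiable ℝ (pd i (fun z => s z k)) :=
    fun i k => (hpds i k).differentiable (by simp)
  -- the representation of second partials, for all pairs (i, j)
  have hsec' : ∀ (i j : Fin n) (k : Fin m),
      ∃ (a b c : Fin m → (Fin n → ℝ) → ℝ) (d : Fin n → (Fin n → ℝ) → ℝ),
        (∀ l, ContDiff ℝ (⊤ : ℕ∞) (a l)) ∧ (∀ l, ContDiff ℝ (⊤ : ℕ∞) (b l)) ∧
        (∀ l, ContDiff ℝ (⊤ : ℕ∞) (c l)) ∧ (∀ l, ContDiff ℝ (⊤ : ℕ∞) (d l)) ∧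
        ∀ x, pd i (pd j (fun z => s z k)) x =
          (∑ l, a l x * s x l) + (∑ l, b l x * pd i (fun z => s z l) x) +
            (∑ l, c l x * pd j (fun z => s z l) x) +
            ∑ c', d c' x * pd c' (fun z => s z k) x := by
    intro i j k
    rcases le_total i j with hij | hji
    · exact hsecond i j hij k
    · obtain ⟨a, b, c, d, ha, hb, hc, hd, heq⟩ := hsecond j i hji k
      refine ⟨a, c, b, d, ha, hc, hb, hd, fun x => ?_⟩
      rw [pd_comm (hsk k) i j x, heq x]
      ring
  choose a b c d ha hb hc hd hrep using hsec'
  -- the state vector along the ray `t ↦ t • v`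
  set y : ℝ → (Fin m ⊕ Fin n × Fin m) → ℝ := fun t =>
    Sum.elim (fun k => s (t • v) k) (fun p => pd p.1 (fun z => s z p.2) (t • v)) with hy_def
  set y' : ℝ → (Fin m ⊕ Fin n × Fin m) → ℝ := fun t =>
    Sum.elim (fun k => ∑ j, v j * y t (Sum.inr (j, k)))
      (fun p => ∑ j, v j * pd j (pd p.1 (fun z => s z p.2)) (t • v)) with hy'_def
  have hyderiv : ∀ t, HasDerivAt y (y' t) t := by
    intro t
    rw [hasDerivAt_pi]
    rintro (k | ⟨i, l⟩)
    · have := hasDerivAt_ray (hsdk k) v t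
      have h2 : fderiv ℝ (fun z => s z k) (t • v) v
          = ∑ j, v j * pd j (fun z => s z k) (t • v) := fderiv_eq_sum _ _
      simpa [hy_def, hy'_def, h2] using this
    · have := hasDerivAt_ray (hpdd i l) v t
      have h2 : fderiv ℝ (pd i (fun z => s z l)) (t • v) v
          = ∑ j, v j * pd j (pd i (fun z => s z l)) (t • v) := fderiv_eq_sum _ _
      simpa [hy_def, hy'_def, h2] using this
  have hycont : Continuous y := by
    have hray : Continuous fun t : ℝ => t • v := continuous_id.smul continuous_const
    apply continuous_pi
    rintro (k | ⟨i, l⟩)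
    · exact ((hsk k).continuous).comp hray
    · exact ((hpds i l).continuous).comp hray
  -- initial condition
  have hy0 : y 0 = 0 := by
    funext idx
    rcases idx with k | ⟨i, l⟩
    · simp [hy_def, hs0]
    · have hcomp : (fun z => s z l)
          = (ContinuousLinearMap.proj l : (Fin m → ℝ) →L[ℝ] ℝ) ∘ s := rfl
      have hf : fderiv ℝ (fun z => s z l) 0
          = (ContinuousLinearMap.proj l : (Fin m → ℝ) →L[ℝ] ℝ).comp (fderiv ℝ s 0) := by
        rw [hcomp]
        exact ((ContinuousLinearMap.proj l).hasFDerivAt.comp 0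
          ((hs.differentiable (by simp)) 0).hasFDerivAt).fderiv
      simp [hy_def, pd, hf, hD0]
  -- uniform bound for the coefficients along the segment
  set Br : Fin n → Fin n → Fin m → (Fin n → ℝ) → ℝ := fun i j l z =>
    (∑ p, |a i j l p z|) + (∑ p, |b i j l p z|) + (∑ p, |c i j l p z|) +
      ∑ c', |d i j l c' z| with hBr_def
  have hBrnonneg : ∀ i j l z, 0 ≤ Br i j l z := by
    intro i j l z
    have h1 : ∀ (q : Fin m → ℝ), 0 ≤ ∑ p, |q p| :=
      fun q => Finset.sum_nonneg fun p _ => abs_nonneg _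
    have h2 : (0:ℝ) ≤ ∑ c', |d i j l c' z| := Finset.sum_nonneg fun p _ => abs_nonneg _
    have := h1 (fun p => a i j l p z)
    have := h1 (fun p => b i j l p z)
    have := h1 (fun p => c i j l p z)
    simp only [hBr_def]
    positivity
  set F : (Fin n → ℝ) → ℝ := fun z => ∑ i, ∑ j, ∑ l, Br i j l z with hF_def
  have hBrF : ∀ i j l z, Br i j l z ≤ F z := by
    intro i j l z
    calc Br i j l z ≤ ∑ l', Br i j l' z :=
          Finset.single_le_sum (fun p _ => hBrnonneg i j p z) (Finset.mem_univ l)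
      _ ≤ ∑ j', ∑ l', Br i j' l' z :=
          Finset.single_le_sum
            (fun p _ => Finset.sum_nonneg fun q _ => hBrnonneg i p q z) (Finset.mem_univ j)
      _ ≤ F z :=
          Finset.single_le_sum
            (fun p _ => Finset.sum_nonneg fun q _ =>
              Finset.sum_nonneg fun r _ => hBrnonneg p q r z) (Finset.mem_univ i)
  have hFc : Continuous F := by
    apply continuous_finset_sum; intro i _
    apply continuous_finset_sum; intro j _
    apply continuous_finset_sum; intro l _
    exact ((((continuous_finset_sum _ fun p _ => ((ha i j l p).continuous.abs)).add
      (continuous_finset_sum _ fun p _ => ((hb i j l p).continuous.abs))).add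
      (continuous_finset_sum _ fun p _ => ((hc i j l p).continuous.abs))).add
      (continuous_finset_sum _ fun p _ => ((hd i j l p).continuous.abs)))
  have hScompact : IsCompact ((fun t : ℝ => t • v) '' Set.Icc 0 1) :=
    isCompact_Icc.image (continuous_id.smul continuous_const)
  obtain ⟨C, hC⟩ := hScompact.exists_bound_of_continuousOn hFc.continuousOn
  set M : ℝ := max C 0 with hM_def
  have hM0 : 0 ≤ M := le_max_right _ _
  have hFM : ∀ t ∈ Set.Icc (0:ℝ) 1, F (t • v) ≤ M := by
    intro t ht
    have hmem : t • v ∈ (fun t : ℝ => t • v) '' Set.Icc 0 1 := ⟨t, ht, rfl⟩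
    calc F (t • v) ≤ |F (t • v)| := le_abs_self _
      _ ≤ C := hC _ hmem
      _ ≤ M := le_max_left _ _
  set V : ℝ := ∑ j, |v j| with hV_def
  have hV0 : 0 ≤ V := Finset.sum_nonneg fun j _ => abs_nonneg _
  set K : ℝ := V * (M + 1) with hK_def
  have hK0 : 0 ≤ K := mul_nonneg hV0 (by linarith)
  -- the Gronwall bound on the derivative
  have hbound : ∀ t ∈ Set.Ico (0:ℝ) 1, ‖y' t‖ ≤ K * ‖y t‖ + 0 := by
    intro t ht
    have htIcc : t ∈ Set.Icc (0:ℝ) 1 := ⟨ht.1, le_of_lt ht.2⟩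
    set N : ℝ := ‖y t‖ with hN_def
    have hN0 : 0 ≤ N := norm_nonneg _
    have hcomp_le : ∀ idx, |y t idx| ≤ N := fun idx => norm_le_pi_norm (y t) idx
    rw [add_zero]
    have hKN : 0 ≤ K * N := mul_nonneg hK0 hN0
    rw [show K * N = K * ‖y t‖ from rfl] at hKN ⊢
    rw [pi_norm_le_iff_of_nonneg hKN]
    rintro (k | ⟨i, l⟩)
    · have h1 : |∑ j, v j * y t (Sum.inr (j, k))| ≤ V * N :=
        abs_sum_mul_le v _ fun j => hcomp_le (Sum.inr (j, k))
      have h2 : V * N ≤ K * N := by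
        apply mul_le_mul_of_nonneg_right _ hN0
        nlinarith
      calc ‖y' t (Sum.inl k)‖ = |∑ j, v j * y t (Sum.inr (j, k))| := rfl
        _ ≤ V * N := h1
        _ ≤ K * N := h2
    · -- bound each second partial along the ray
      have hsecond_bound : ∀ j : Fin n,
          |pd j (pd i (fun z => s z l)) (t • v)| ≤ M * N := by
        intro j
        have hx := hrep j i l (t • v)
        set z : Fin n → ℝ := t • v with hz_def
        have e1 : |∑ p, a j i l p z * s z p| ≤ (∑ p, |a j i l p z|) * N :=
          abs_sum_mul_le _ _ fun p => hcomp_le (Sum.inl p)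
        have e2 : |∑ p, b j i l p z * pd j (fun w => s w p) z|
            ≤ (∑ p, |b j i l p z|) * N :=
          abs_sum_mul_le _ _ fun p => hcomp_le (Sum.inr (j, p))
        have e3 : |∑ p, c j i l p z * pd i (fun w => s w p) z|
            ≤ (∑ p, |c j i l p z|) * N :=
          abs_sum_mul_le _ _ fun p => hcomp_le (Sum.inr (i, p))
        have e4 : |∑ c', d j i l c' z * pd c' (fun w => s w l) z|
            ≤ (∑ c', |d j i l c' z|) * N :=
          abs_sum_mul_le _ _ fun c' => hcomp_le (Sum.inr (c', l))
        have hBrM : Br j i l z ≤ M := le_trans (hBrF j i l z) (hFM t htIcc)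
        calc |pd j (pd i (fun w => s w l)) z|
            = |(∑ p, a j i l p z * s z p) + (∑ p, b j i l p z * pd j (fun w => s w p) z) +
                (∑ p, c j i l p z * pd i (fun w => s w p) z) +
                ∑ c', d j i l c' z * pd c' (fun w => s w l) z| := by rw [hx]
          _ ≤ |∑ p, a j i l p z * s z p| + |∑ p, b j i l p z * pd j (fun w => s w p) z| +
                |∑ p, c j i l p z * pd i (fun w => s w p) z| +
                |∑ c', d j i l c' z * pd c' (fun w => s w l) z| := by
              exact abs_add_four' _ _ _ _
          _ ≤ Br j i l z * N := by
              rw [hBr_def]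
              simp only [add_mul]
              linarith
          _ ≤ M * N := mul_le_mul_of_nonneg_right hBrM hN0
      have h1 : |∑ j, v j * pd j (pd i (fun z => s z l)) (t • v)| ≤ V * (M * N) :=
        abs_sum_mul_le v _ hsecond_bound
      calc ‖y' t (Sum.inr (i, l))‖
          = |∑ j, v j * pd j (pd i (fun z => s z l)) (t • v)| := rfl
        _ ≤ V * (M * N) := h1
        _ ≤ K * N := by rw [hK_def]; nlinarith
  -- apply Grönwall's inequality
  have hgron := norm_le_gronwallBound_of_norm_deriv_right_le
    (f := y) (f' := y') (δ := 0) (K := K) (ε := 0) (a := 0) (b := 1)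
    hycont.continuousOn
    (fun t _ => (hyderiv t).hasDerivWithinAt)
    (by rw [hy0]; simp)
    hbound
  have h1 : ‖y 1‖ ≤ 0 := by
    have := hgron 1 (by norm_num)
    rwa [gronwallBound_ε0_δ0] at this
  have hy1 : y 1 = 0 := norm_le_zero_iff.mp h1
  funext k
  have : y 1 (Sum.inl k) = 0 := by rw [hy1]; rfl
  simpa [hy_def] using this
end
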